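/- Let $r \ge 2$, let $p \ge 2$, and let $G$ be an $r$-uniform hypergraph on vertex set $[n]$ with vertex degrees $d_1, \ldots, d_n$. Then $\rho^{(p)}(G) \ge (r-1)!\, n^{1 - r/p} \left( \frac{1}{n} \left( d_1^{p/(p-1)} + \cdots + d_n^{p/(p-1)} \right) \right)^{(p-1)/p}$. -/

import Mathlib

open Finset

/-- The `ℓ^p` norm of a vector in `ℝ^n`. -/
noncomputable def lpNorm {n : ℕ} (p : ℝ) (x : Fin n → ℝ) : ℝ :=
  (∑ i, |x i| ^ p) ^ (1 / p)

/-- The `p`-spectral radius of an `r`-uniform hypergraph `G` on `[n]`: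
`ρ⁽ᵖ⁾(G) = max_{|x|_p = 1} r! ∑_{e ∈ E(G)} ∏_{i ∈ e} x_i`. -/
noncomputable def hypSpecRad {n : ℕ} (r : ℕ) (p : ℝ)
    (G : Finset (Finset (Fin n))) : ℝ :=
  sSup {v | ∃ x : Fin n → ℝ, lpNorm p x = 1 ∧
    v = (r.factorial : ℝ) * ∑ e ∈ G, ∏ i ∈ e, x i}

/-!
Let `y ≥ 0` be the unit vector of `ℓ^p` dual to the degree vector, so that `∑ dᵢ yᵢ = ‖d‖_q` with
`q = p/(p-1)`, and test the spectral radius on `xᵢ = (((r-1)/n + yᵢ^p)/r)^{1/p}`, the `p`-mean of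
`r - 1` copies of the uniform entry `n^{-1/p}` and of `yᵢ`. Edge by edge,
`n^{-(r-1)/p} ∑_{i∈e} yᵢ ≤ r ∏_{i∈e} xᵢ`. By monotonicity of power means it suffices to prove this
for `p = 2`, where it reads `r^{r-2} (∑ yᵢ)² ≤ ∏ (r - 1 + yᵢ²)` and follows from Cauchy–Schwarz with
the weights `νᵢ = (r-1)/(r-1+yᵢ²)`, Maclaurin's inequality for `e_{r-1}(ν)` and AM-GM.
Summing over the edges turns `∑_e ∑_{i∈e} yᵢ` into `∑ dᵢ yᵢ`.
-/

theorem pow_card_mul_prod_le_sum_pow {ι : Type*} (s : Finset ι) {f : ι → ℝ}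
    (hf : ∀ i ∈ s, 0 ≤ f i) : (#s : ℝ) ^ #s * ∏ i ∈ s, f i ≤ (∑ i ∈ s, f i) ^ #s := by
  rcases s.eq_empty_or_nonempty with rfl | hs
  · simp
  have hk : (#s : ℝ) ≠ 0 := by exact_mod_cast hs.card_pos.ne'
  have amgm := Real.geom_mean_le_arith_mean_weighted s (fun _ => (#s : ℝ)⁻¹) f
    (fun _ _ => by positivity) (by simp [hk]) hf
  have := pow_le_pow_left₀ (prod_nonneg fun i hi => Real.rpow_nonneg (hf i hi) _) amgm #s
  rwa [← prod_pow, prod_congr rfl fun i hi => Real.rpow_inv_natCast_pow (hf i hi) hs.card_pos.ne',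
    ← mul_sum, mul_pow, inv_pow, le_inv_mul_iff₀ (by positivity)] at this

theorem pow_succ_mul_pow_mul_le (k : ℕ) {x y : ℝ} (hx : 0 ≤ x) (hy : 0 ≤ y) :
    ((k : ℝ) + 1) ^ (k + 1) * (x ^ k * y) ≤ (k * x + y) ^ (k + 1) := by
  have := pow_card_mul_prod_le_sum_pow (range (k + 1)) (f := fun i => if i = 0 then y else x)
    (by intro i _; split_ifs <;> assumption)
  simpa [prod_range_succ', sum_range_succ'] using this

theorem sum_prod_erase_cons {ι R : Type*} [DecidableEq ι] [CommSemiring R] (a : ι) (s : Finset ι)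
    (ha : a ∉ s) (f : ι → R) :
    ∑ i ∈ cons a s ha, ∏ j ∈ (cons a s ha).erase i, f j
      = ∏ j ∈ s, f j + f a * ∑ i ∈ s, ∏ j ∈ s.erase i, f j := by
  rw [sum_cons, erase_cons, mul_sum]
  congr 1
  refine sum_congr rfl fun i hi => ?_
  have hai : a ≠ i := fun h => ha (h ▸ hi)
  rw [cons_eq_insert, erase_insert_of_ne hai, prod_insert fun h => ha (mem_of_mem_erase h)]

theorem succ_pow_mul_pow_mul_le {k : ℕ} (hk : 1 ≤ k) {a σ : ℝ} (ha : 0 ≤ a) (hσ : 0 ≤ σ) :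
    ((k : ℝ) + 1) ^ (k - 1) * σ ^ (k - 1) * (σ + k ^ 2 * a) ≤ (k : ℝ) ^ k * (a + σ) ^ k := by
  obtain ⟨m, rfl⟩ : ∃ m, k = m + 1 := ⟨k - 1, by omega⟩
  have h := pow_succ_mul_pow_mul_le m (x := (m + 2) * σ) (y := σ + (m + 1) ^ 2 * a)
    (by positivity) (by positivity)
  rw [Nat.add_sub_cancel]
  push_cast
  refine le_of_mul_le_mul_left ?_ (by positivity : (0 : ℝ) < ((m : ℝ) + 1) ^ (m + 1))
  calc ((m : ℝ) + 1) ^ (m + 1) * ((m + 1 + 1) ^ m * σ ^ m * (σ + (m + 1) ^ 2 * a))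
      = (m + 1) ^ (m + 1) * (((m + 2) * σ) ^ m * (σ + (m + 1) ^ 2 * a)) := by rw [mul_pow]; ring
    _ ≤ (m * ((m + 2) * σ) + (σ + (m + 1) ^ 2 * a)) ^ (m + 1) := h
    _ = (m + 1) ^ (m + 1) * ((m + 1) ^ (m + 1) * (a + σ) ^ (m + 1)) := by
      rw [show (m : ℝ) * ((m + 2) * σ) + (σ + (m + 1) ^ 2 * a) = (m + 1) * ((m + 1) * (a + σ)) by
        ring, mul_pow, mul_pow]

/-- Maclaurin's inequality `e_{k-1}/k ≤ (e_1/k)^{k-1}` for `k` nonnegative reals. -/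
theorem card_pow_mul_sum_prod_erase_le {ι : Type*} [DecidableEq ι] (s : Finset ι) {f : ι → ℝ}
    (hf : ∀ i ∈ s, 0 ≤ f i) :
    (#s : ℝ) ^ (#s - 2) * ∑ i ∈ s, ∏ j ∈ s.erase i, f j ≤ (∑ i ∈ s, f i) ^ (#s - 1) := by
  induction s using Finset.cons_induction with
  | empty => simp
  | cons a s ha ih =>
    have hf' : ∀ i ∈ s, 0 ≤ f i := fun i hi => hf i (mem_cons_of_mem hi)
    rw [sum_prod_erase_cons, card_cons, sum_cons]
    rcases s.eq_empty_or_nonempty with rfl | hs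
    · simp
    set k := #s
    set σ := ∑ i ∈ s, f i
    have hk : 1 ≤ k := hs.card_pos
    have hkk : (0 : ℝ) < (k : ℝ) ^ k := by positivity
    have hprod : (k : ℝ) ^ k * ∏ i ∈ s, f i ≤ σ ^ k := pow_card_mul_prod_le_sum_pow s hf'
    have hesymm : (k : ℝ) ^ k * ∑ i ∈ s, ∏ j ∈ s.erase i, f j ≤ (k : ℝ) ^ 2 * σ ^ (k - 1) := by
      have hpow : (k : ℝ) ^ k = (k : ℝ) ^ 2 * (k : ℝ) ^ (k - 2) := by
        rcases hk.eq_or_lt with h | h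
        · simp [← h]
        · rw [← pow_add]; congr 1; omega
      rw [hpow, mul_assoc]
      exact mul_le_mul_of_nonneg_left (ih hf') (by positivity)
    rw [show k + 1 - 2 = k - 1 by omega, Nat.add_sub_cancel, ← mul_le_mul_iff_right₀ hkk]
    calc (k : ℝ) ^ k * ((k + 1 : ℕ) ^ (k - 1) * (∏ i ∈ s, f i + f a * ∑ i ∈ s, ∏ j ∈ s.erase i, f j))
        = (k + 1) ^ (k - 1) * ((k : ℝ) ^ k * ∏ i ∈ s, f i
            + f a * ((k : ℝ) ^ k * ∑ i ∈ s, ∏ j ∈ s.erase i, f j)) := by push_cast; ring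
      _ ≤ (k + 1) ^ (k - 1) * (σ ^ k + f a * ((k : ℝ) ^ 2 * σ ^ (k - 1))) := by
        gcongr
        exact hf a (mem_cons_self a s)
      _ = (k + 1) ^ (k - 1) * σ ^ (k - 1) * (σ + k ^ 2 * f a) := by
        rw [← pow_sub_mul_pow σ hk, pow_one]; ring
      _ ≤ (k : ℝ) ^ k * (f a + σ) ^ k :=
        succ_pow_mul_pow_mul_le hk (hf a (mem_cons_self a s)) (sum_nonneg hf')

theorem sub_mul_pow_le_pow {k : ℕ} (hk : 1 ≤ k) {σ : ℝ} (hσ : 0 ≤ σ) (hσk : σ ≤ k) :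
    ((k : ℝ) - σ) * σ ^ (k - 1) ≤ ((k : ℝ) - 1) ^ (k - 1) := by
  obtain ⟨m, rfl⟩ : ∃ m, k = m + 1 := ⟨k - 1, by omega⟩
  rcases Nat.eq_zero_or_pos m with rfl | hm
  · norm_num [hσ]
  have hm' : (0 : ℝ) < m := by exact_mod_cast hm
  have h := pow_succ_mul_pow_mul_le m hσ (y := m * (m + 1 - σ)) (by push_cast at hσk; nlinarith)
  rw [show (m : ℝ) * σ + m * (m + 1 - σ) = m * (m + 1) by ring, mul_pow] at h
  push_cast
  simp only [add_sub_cancel_right]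
  have : 0 < ((m : ℝ) + 1) ^ (m + 1) * m := by positivity
  refine le_of_mul_le_mul_left ?_ this
  calc ((m : ℝ) + 1) ^ (m + 1) * m * ((m + 1 - σ) * σ ^ m)
      = (m + 1) ^ (m + 1) * (σ ^ m * (m * (m + 1 - σ))) := by ring
    _ ≤ m ^ (m + 1) * (m + 1) ^ (m + 1) := h
    _ = (m + 1) ^ (m + 1) * m * m ^ m := by ring

theorem sq_sum_le_card_sub_sum_div_mul_sum {ι : Type*} (e : Finset ι) {c : ℝ} (hc : 0 < c)
    (y : ι → ℝ) :
    (∑ i ∈ e, y i) ^ 2 ≤ (#e - ∑ i ∈ e, c / (c + y i ^ 2)) * ∑ i ∈ e, (c + y i ^ 2) := by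
  have hw : ∀ i, 0 < c + y i ^ 2 := fun i => by positivity
  have hsq : ∑ i ∈ e, y i ^ 2 / (c + y i ^ 2) = #e - ∑ i ∈ e, c / (c + y i ^ 2) := by
    rw [show (#e : ℝ) = ∑ i ∈ e, (1 : ℝ) by simp, ← sum_sub_distrib]
    refine sum_congr rfl fun i _ => ?_
    rw [eq_sub_iff_add_eq, ← add_div, add_comm, div_self (hw i).ne']
  rw [← hsq]
  refine sum_sq_le_sum_mul_sum_of_sq_le_mul e (fun i _ => by have := hw i; positivity)
    (fun i _ => (hw i).le) fun i _ => (div_mul_cancel₀ _ (hw i).ne').ge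

theorem card_pow_mul_pow_mul_sq_sum_le_prod {ι : Type*} [DecidableEq ι] (e : Finset ι)
    (he : 2 ≤ #e) {a : ℝ} (ha : 0 < a) (y : ι → ℝ) :
    (#e : ℝ) ^ (#e - 2) * a ^ (#e - 1) * (∑ i ∈ e, y i) ^ 2
      ≤ ∏ i ∈ e, ((#e - 1) * a + y i ^ 2) := by
  set k := #e with hk
  have hk2 : (2 : ℝ) ≤ k := by exact_mod_cast he
  set c := ((k : ℝ) - 1) * a
  have hc : 0 < c := mul_pos (by linarith) ha
  set w : ι → ℝ := fun i => c + y i ^ 2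
  have hw : ∀ i, 0 < w i := fun i => by positivity
  set ν : ι → ℝ := fun i => c / w i
  have hν : ∀ i, 0 < ν i := fun i => div_pos hc (hw i)
  have hwν : ∀ i, w i * ν i = c := fun i => mul_div_cancel₀ c (hw i).ne'
  set σ := ∑ i ∈ e, ν i
  have hσ : 0 ≤ σ := sum_nonneg fun i _ => (hν i).le
  have hσk : σ ≤ k := by
    calc σ ≤ ∑ i ∈ e, (1 : ℝ) := sum_le_sum fun i _ =>
          (div_le_one (hw i)).2 (le_add_of_nonneg_right (sq_nonneg _))
      _ = k := by simp [hk]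
  have hCS : (∑ i ∈ e, y i) ^ 2 ≤ (k - σ) * ∑ i ∈ e, w i :=
    sq_sum_le_card_sub_sum_div_mul_sum e hc y
  have hsumw : (∑ i ∈ e, w i) * ∏ i ∈ e, ν i = c * ∑ i ∈ e, ∏ j ∈ e.erase i, ν j := by
    rw [sum_mul, mul_sum]
    refine sum_congr rfl fun i hi => ?_
    rw [← mul_prod_erase e ν hi, ← mul_assoc, hwν]
  have hprodw : (∏ i ∈ e, w i) * ∏ i ∈ e, ν i = c ^ k := by
    rw [← prod_mul_distrib, prod_congr rfl fun i _ => hwν i, prod_const]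
  -- multiplied by `∏ ν`, the right side becomes `c ^ k` and `∑ w` becomes `c e_{k-1}(ν)`
  refine le_of_mul_le_mul_right ?_ (prod_pos fun i (_ : i ∈ e) => hν i)
  calc (k : ℝ) ^ (k - 2) * a ^ (k - 1) * (∑ i ∈ e, y i) ^ 2 * ∏ i ∈ e, ν i
      ≤ (k : ℝ) ^ (k - 2) * a ^ (k - 1) * ((k - σ) * ∑ i ∈ e, w i) * ∏ i ∈ e, ν i := by
        gcongr
    _ = (k : ℝ) ^ (k - 2) * a ^ (k - 1) * (k - σ) * ((∑ i ∈ e, w i) * ∏ i ∈ e, ν i) := by ring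
    _ = a ^ (k - 1) * c * ((k - σ) * ((k : ℝ) ^ (k - 2) * ∑ i ∈ e, ∏ j ∈ e.erase i, ν j)) := by
        rw [hsumw]; ring
    _ ≤ a ^ (k - 1) * c * ((k - σ) * σ ^ (k - 1)) := by
        gcongr
        exact card_pow_mul_sum_prod_erase_le e fun i _ => (hν i).le
    _ ≤ a ^ (k - 1) * c * ((k - 1) ^ (k - 1)) := by
        gcongr
        exact sub_mul_pow_le_pow (by omega) hσ hσk
    _ = c ^ k := by
        rw [← pow_sub_mul_pow c (by omega : 1 ≤ k), pow_one, mul_pow]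
        ring
    _ = (∏ i ∈ e, w i) * ∏ i ∈ e, ν i := hprodw.symm

theorem sqrt_mean_sq_le_rpow_mean {p : ℝ} (hp : 2 ≤ p) {a b s t : ℝ} (ha : 0 ≤ a) (hb : 0 ≤ b)
    (hab : a + b = 1) (hs : 0 ≤ s) (ht : 0 ≤ t) :
    √(a * s ^ 2 + b * t ^ 2) ≤ (a * s ^ p + b * t ^ p) ^ p⁻¹ := by
  have hp0 : 0 < p := by linarith
  have hsq : ∀ {x : ℝ}, 0 ≤ x → (x ^ 2) ^ (p / 2) = x ^ p := fun hx => by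
    rw [← Real.rpow_natCast, ← Real.rpow_mul hx]; norm_num; ring_nf
  have hconv := (convexOn_rpow (p := p / 2) (by linarith)).2 (Set.mem_Ici.2 (sq_nonneg s))
    (Set.mem_Ici.2 (sq_nonneg t)) ha hb hab
  simp only [smul_eq_mul, hsq hs, hsq ht] at hconv
  calc √(a * s ^ 2 + b * t ^ 2) = ((a * s ^ 2 + b * t ^ 2) ^ (p / 2)) ^ p⁻¹ := by
        rw [Real.sqrt_eq_rpow, ← Real.rpow_mul (by positivity)]; congr 1; field_simp
    _ ≤ (a * s ^ p + b * t ^ p) ^ p⁻¹ := by gcongr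

theorem pow_mul_sum_le_card_mul_prod_rpow_mean {ι : Type*} [DecidableEq ι] (e : Finset ι)
    (he : 2 ≤ #e) {p : ℝ} (hp : 2 ≤ p) {u : ℝ} (hu : 0 < u) {y : ι → ℝ}
    (hy : ∀ i ∈ e, 0 ≤ y i) :
    u ^ (#e - 1) * ∑ i ∈ e, y i ≤ #e * ∏ i ∈ e, (((#e - 1) * u ^ p + y i ^ p) / #e) ^ p⁻¹ := by
  set k := #e
  have hk : (0 : ℝ) < k := by positivity
  have hk1 : (0 : ℝ) ≤ k - 1 := by
    have : (2 : ℝ) ≤ k := by exact_mod_cast he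
    linarith
  have hquad : u ^ (k - 1) * ∑ i ∈ e, y i ≤ k * ∏ i ∈ e, √(((k - 1) * u ^ 2 + y i ^ 2) / k) := by
    have hsq := card_pow_mul_pow_mul_sq_sum_le_prod e he (pow_pos hu 2) y
    have hrhs : ((k : ℝ) * ∏ i ∈ e, √(((k - 1) * u ^ 2 + y i ^ 2) / k)) ^ 2
        = (∏ i ∈ e, ((k - 1) * u ^ 2 + y i ^ 2)) / (k : ℝ) ^ (k - 2) := by
      rw [mul_pow, ← prod_pow, prod_congr rfl fun i _ => Real.sq_sqrt (by positivity),
        prod_div_distrib, prod_const, ← pow_sub_mul_pow (k : ℝ) he]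
      field_simp
    rw [← pow_le_pow_iff_left₀ (mul_nonneg (by positivity) (sum_nonneg hy)) (by positivity)
      two_ne_zero, hrhs, le_div_iff₀ (by positivity)]
    calc (u ^ (k - 1) * ∑ i ∈ e, y i) ^ 2 * (k : ℝ) ^ (k - 2)
        = (k : ℝ) ^ (k - 2) * (u ^ 2) ^ (k - 1) * (∑ i ∈ e, y i) ^ 2 := by ring
      _ ≤ ∏ i ∈ e, ((k - 1) * u ^ 2 + y i ^ 2) := hsq
  refine hquad.trans (mul_le_mul_of_nonneg_left (prod_le_prod (fun i _ => by positivity)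
    fun i hi => ?_) hk.le)
  have hmean := sqrt_mean_sq_le_rpow_mean hp (div_nonneg hk1 hk.le) (inv_nonneg.2 hk.le)
    (by field_simp; ring) hu.le (hy i hi)
  simpa only [add_div, div_mul_eq_mul_div, inv_mul_eq_div] using hmean

theorem exists_sum_rpow_eq_one_and_sum_mul_eq {ι : Type*} [Fintype ι] {p : ℝ} (hp : 1 < p)
    {f : ι → ℝ} (hf : ∀ i, 0 ≤ f i) (hS : 0 < ∑ i, f i ^ (p / (p - 1))) :
    ∃ y : ι → ℝ, (∀ i, 0 ≤ y i) ∧ ∑ i, y i ^ p = 1 ∧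
      ∑ i, f i * y i = (∑ i, f i ^ (p / (p - 1))) ^ ((p - 1) / p) := by
  set S := ∑ i, f i ^ (p / (p - 1))
  have hp0 : p ≠ 0 := by positivity
  have hq0 : 0 < p / (p - 1) := div_pos (by linarith) (by linarith)
  have hq : ∀ i, 0 ≤ f i ^ (p / (p - 1)) / S := fun i => by have := hf i; positivity
  refine ⟨fun i => (f i ^ (p / (p - 1)) / S) ^ p⁻¹, fun i => by have := hq i; positivity, ?_, ?_⟩
  · simp only [Real.rpow_inv_rpow (hq _) hp0, ← sum_div]
    exact div_self hS.ne'
  · have hexp : 1 + p / (p - 1) * p⁻¹ = p / (p - 1) := by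
      field_simp [show p - 1 ≠ 0 by linarith]; ring
    have hterm : ∀ i, f i * (f i ^ (p / (p - 1)) / S) ^ p⁻¹ = f i ^ (p / (p - 1)) / S ^ p⁻¹ := by
      intro i
      rw [Real.div_rpow (Real.rpow_nonneg (hf i) _) hS.le, ← Real.rpow_mul (hf i), mul_div_assoc']
      conv_rhs => rw [← hexp, Real.rpow_add' (hf i) (by rw [hexp]; exact hq0.ne'), Real.rpow_one]
    rw [sum_congr rfl fun i _ => hterm i, ← sum_div, show (p - 1) / p = 1 - p⁻¹ by field_simp,
      Real.rpow_sub hS, Real.rpow_one]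

theorem sum_sum_mem_eq_sum_card_filter_mul {α : Type*} [Fintype α] [DecidableEq α]
    (G : Finset (Finset α)) (y : α → ℝ) : ∑ e ∈ G, ∑ i ∈ e, y i = ∑ i, #(G.filter (fun e => i ∈ e)) * y i := by
  rw [sum_comm' (t' := univ) (s' := fun i => G.filter (fun e => i ∈ e)) (by simp)]
  simp [sum_const, nsmul_eq_mul]

section SpectralRadius

variable {n : ℕ} {p : ℝ}

theorem lpNorm_eq_one_iff (hp : 0 < p) (x : Fin n → ℝ) :
    lpNorm p x = 1 ↔ ∑ i, |x i| ^ p = 1 := by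
  have hS : 0 ≤ ∑ i, |x i| ^ p := sum_nonneg fun i _ => by positivity
  rw [lpNorm, ← Real.rpow_left_inj (by positivity) zero_le_one hp.ne', ← Real.rpow_mul hS,
    one_div_mul_cancel hp.ne', Real.rpow_one, Real.one_rpow]

theorem abs_le_one_of_lpNorm_eq_one (hp : 0 < p) {x : Fin n → ℝ} (hx : lpNorm p x = 1)
    (i : Fin n) : |x i| ≤ 1 := by
  rw [lpNorm_eq_one_iff hp] at hx
  rw [← Real.rpow_le_rpow_iff (abs_nonneg _) zero_le_one hp, Real.one_rpow, ← hx]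
  exact single_le_sum (f := fun j => |x j| ^ p) (fun j _ => by positivity) (mem_univ i)

theorem le_hypSpecRad (r : ℕ) (hp : 0 < p) (G : Finset (Finset (Fin n))) {x : Fin n → ℝ}
    (hx : lpNorm p x = 1) : (r.factorial : ℝ) * ∑ e ∈ G, ∏ i ∈ e, x i ≤ hypSpecRad r p G := by
  refine le_csSup ⟨r.factorial * #G, ?_⟩ ⟨x, hx, rfl⟩
  rintro v ⟨z, hz, rfl⟩
  have hprod : ∀ e ∈ G, ∏ i ∈ e, z i ≤ 1 := fun e _ =>
    (le_abs_self _).trans <| (abs_prod e z).trans_le <|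
      prod_le_one (fun i _ => abs_nonneg _) fun i _ => abs_le_one_of_lpNorm_eq_one hp hz i
  simpa using mul_le_mul_of_nonneg_left (sum_le_sum hprod) (Nat.cast_nonneg r.factorial)

theorem natCast_mul_rpow_neg_inv_rpow (hn : 0 < n) (hp : p ≠ 0) :
    (n : ℝ) * ((n : ℝ) ^ (-p⁻¹)) ^ p = 1 := by
  rw [← Real.rpow_mul n.cast_nonneg, neg_mul, inv_mul_cancel₀ hp, Real.rpow_neg_one,
    mul_inv_cancel₀ (by positivity)]

theorem hypSpecRad_nonneg (r : ℕ) (hp : 0 < p) (G : Finset (Finset (Fin n))) :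
    0 ≤ hypSpecRad r p G := by
  rcases n.eq_zero_or_pos with rfl | hn
  · refine Real.sSup_nonneg ?_
    rintro v ⟨x, hx, -⟩
    simp [lpNorm, Real.zero_rpow (inv_ne_zero hp.ne')] at hx
  · set u := (n : ℝ) ^ (-p⁻¹)
    have hu : 0 < u := by positivity
    have hx : lpNorm p (fun _ : Fin n => u) = 1 := by
      rw [lpNorm_eq_one_iff hp, sum_const, card_univ, Fintype.card_fin, nsmul_eq_mul,
        abs_of_pos hu, natCast_mul_rpow_neg_inv_rpow hn hp.ne']
    exact le_trans (by positivity) (le_hypSpecRad r hp G hx)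

theorem factorial_mul_pow_mul_sum_sum_le_hypSpecRad {r : ℕ} (hr : 2 ≤ r) (hp : 2 ≤ p)
    (G : Finset (Finset (Fin n))) (hG : ∀ e ∈ G, #e = r) {u : ℝ} (hu : 0 < u)
    (hnu : n * u ^ p = 1) {y : Fin n → ℝ} (hy : ∀ i, 0 ≤ y i) (hy1 : ∑ i, y i ^ p = 1) :
    ((r - 1).factorial : ℝ) * u ^ (r - 1) * ∑ e ∈ G, ∑ i ∈ e, y i ≤ hypSpecRad r p G := by
  have hp0 : 0 < p := by linarith
  have hr1 : (0 : ℝ) ≤ r - 1 := by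
    have : (2 : ℝ) ≤ r := by exact_mod_cast hr
    linarith
  set x : Fin n → ℝ := fun i => (((r - 1) * u ^ p + y i ^ p) / r) ^ p⁻¹
  have hx : lpNorm p x = 1 := by
    have hbase : ∀ i, 0 ≤ ((r - 1) * u ^ p + y i ^ p) / r := fun i => by
      have := hy i
      positivity
    rw [lpNorm_eq_one_iff hp0]
    simp only [x, abs_of_nonneg (Real.rpow_nonneg (hbase _) _), Real.rpow_inv_rpow (hbase _) hp0.ne']
    rw [← sum_div, sum_add_distrib, hy1, sum_const, card_univ, Fintype.card_fin, nsmul_eq_mul]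
    field_simp
    linear_combination (r - 1 : ℝ) * hnu
  have hedge : ∀ e ∈ G, u ^ (r - 1) * ∑ i ∈ e, y i ≤ r * ∏ i ∈ e, x i := fun e he => by
    simpa only [hG e he] using
      pow_mul_sum_le_card_mul_prod_rpow_mean e (hG e he ▸ hr) hp hu fun i _ => hy i
  calc ((r - 1).factorial : ℝ) * u ^ (r - 1) * ∑ e ∈ G, ∑ i ∈ e, y i
      = (r - 1).factorial * ∑ e ∈ G, u ^ (r - 1) * ∑ i ∈ e, y i := by rw [mul_assoc, mul_sum]
    _ ≤ (r - 1).factorial * ∑ e ∈ G, r * ∏ i ∈ e, x i :=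
      mul_le_mul_of_nonneg_left (sum_le_sum hedge) (by positivity)
    _ = r.factorial * ∑ e ∈ G, ∏ i ∈ e, x i := by
      rw [← mul_sum, ← mul_assoc, ← Nat.cast_mul, mul_comm _ r, Nat.mul_factorial_pred (by omega)]
    _ ≤ hypSpecRad r p G := le_hypSpecRad r hp0 G hx

end SpectralRadius

/-- **Corollary (cogr).** Let `G` be an `r`-uniform hypergraph of order `n`
with degrees `d₁, …, d_n`, `r ≥ 2`, `p ≥ 2`. Then
`ρ⁽ᵖ⁾(G) ≥ (r-1)! n^{1-r/p} ((d₁^{p/(p-1)} + ⋯ + d_n^{p/(p-1)})/n)^{(p-1)/p}`. -/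
theorem hypSpecRad_lower_bound_degrees {r n : ℕ} (hr : 2 ≤ r) {p : ℝ} (hp : 2 ≤ p)
    (G : Finset (Finset (Fin n))) (hG : ∀ e ∈ G, e.card = r)
    (d : Fin n → ℕ) (hd : ∀ i, d i = (G.filter (fun e => i ∈ e)).card) :
    ((r - 1).factorial : ℝ) * (n : ℝ) ^ (1 - (r : ℝ) / p) *
        ((1 / (n : ℝ)) * ∑ i, (d i : ℝ) ^ (p / (p - 1))) ^ ((p - 1) / p)
      ≤ hypSpecRad r p G := by
  have hp0 : 0 < p := by linarith
  set S := ∑ i, (d i : ℝ) ^ (p / (p - 1))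
  rcases (sum_nonneg fun i _ => by positivity : 0 ≤ S).eq_or_lt with hS | hS
  · rw [show S = 0 from hS.symm, mul_zero, Real.zero_rpow (div_pos (by linarith) hp0).ne', mul_zero]
    exact hypSpecRad_nonneg r hp0 G
  obtain ⟨i₀, -⟩ := nonempty_of_sum_ne_zero hS.ne'
  have hn : 0 < n := i₀.pos
  obtain ⟨y, hy, hy1, hdy⟩ :=
    exists_sum_rpow_eq_one_and_sum_mul_eq (by linarith) (fun i => (d i).cast_nonneg) hS
  have key := factorial_mul_pow_mul_sum_sum_le_hypSpecRad hr hp G hG (by positivity)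
    (natCast_mul_rpow_neg_inv_rpow hn hp0.ne') hy hy1
  simp only [sum_sum_mem_eq_sum_card_filter_mul, ← hd, hdy] at key
  have hn' : (0 : ℝ) < n := by exact_mod_cast hn
  have hpow : (n : ℝ) ^ (1 - (r : ℝ) / p) * ((1 / (n : ℝ)) * S) ^ ((p - 1) / p)
      = ((n : ℝ) ^ (-p⁻¹)) ^ (r - 1) * S ^ ((p - 1) / p) := by
    rw [Real.mul_rpow (by positivity) hS.le, one_div, Real.inv_rpow hn'.le, ← Real.rpow_natCast,
      ← Real.rpow_mul hn'.le, Nat.cast_sub (by omega), ← mul_assoc, ← Real.rpow_neg hn'.le,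
      ← Real.rpow_add hn']
    congr 2
    field_simp
    ring
  rwa [mul_assoc, hpow, ← mul_assoc]
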